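/- If Q is Lipschitz equicontinuous, has the shrinking property, and there exists a probability measure μ on (K, 𝓔) that is invariant under Q (i.e. ∫_K Q(x, E) μ(dx) = μ(E) for every E ∈ 𝓔), then Q is weakly ergodic. -/

import Mathlib

/-!
Iterating the shrinking property along a chain of compact sets `{x, y} = E₀, E₁, …, E_k` gives,
uniformly over `u ∈ Lip₁[K]`, `osc_{x,y}(Tⁿu) ≤ (η + κ diam K + αρ)/α + (1 - α)^k · 2 diam K`
for large `n`, which can be made arbitrarily small: this is weak contraction. For bounded
Lipschitz `u`, invariance of `μ` gives `Tⁿu(x) - ∫ u dμ = ∫ (Tⁿu(x) - Tⁿu(z)) μ(dz)`, which tends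
to `0` by dominated convergence; by the portmanteau theorem, convergence against bounded Lipschitz
functions is weak convergence of `Qⁿ(x, ·)` to `μ`.
-/

open MeasureTheory ProbabilityTheory Filter Topology

/-- The oscillation of `u` over a set `E`: `sup {u x - u y : x, y ∈ E}`. -/
noncomputable def oscOn {K : Type*} (u : K → ℝ) (E : Set K) : ℝ :=
  sSup {d : ℝ | ∃ x ∈ E, ∃ y ∈ E, d = u x - u y}

/-- The oscillation of `u` over the whole space. -/
noncomputable def osc {K : Type*} (u : K → ℝ) : ℝ :=
  oscOn u Set.univ

/-- The (smallest) Lipschitz constant `γ(u)` of `u`. -/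
noncomputable def lipConst {K : Type*} [MetricSpace K] (u : K → ℝ) : ℝ :=
  sInf {c : ℝ | 0 ≤ c ∧ ∀ x y, |u x - u y| ≤ c * dist x y}

/-- `u ∈ Lip[K]`: `u` is bounded and Lipschitz continuous. -/
def MemLip {K : Type*} [MetricSpace K] (u : K → ℝ) : Prop :=
  (∃ C : ℝ, ∀ x, |u x| ≤ C) ∧ (∃ c : ℝ, 0 ≤ c ∧ ∀ x y, |u x - u y| ≤ c * dist x y)

/-- `u ∈ Lip₁[K]`: `u` is bounded and Lipschitz with constant at most `1`. -/
def MemLip1 {K : Type*} [MetricSpace K] (u : K → ℝ) : Prop :=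
  (∃ C : ℝ, ∀ x, |u x| ≤ C) ∧ ∀ x y, |u x - u y| ≤ dist x y

/-- Iterates of a Markov kernel: `kiter Q 0 = id`, `kiter Q (n+1) = Q ∘ₖ kiter Q n`, so that
`kiter Q n x = Qⁿ(x, ·)`. -/
noncomputable def kiter {K : Type*} [MeasurableSpace K] (Q : Kernel K K) : ℕ → Kernel K K
  | 0 => Kernel.id
  | n + 1 => Q ∘ₖ kiter Q n

/-- The `n`-step transition operator `Tⁿu(x) = ∫_K u(y) Qⁿ(x, dy)`. -/
noncomputable def Tn {K : Type*} [MeasurableSpace K] (Q : Kernel K K) (n : ℕ)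
    (u : K → ℝ) (x : K) : ℝ :=
  ∫ y, u y ∂(kiter Q n x)

/-- `Q` is Lipschitz equicontinuous: there is `C > 0` with `γ(Tⁿu) ≤ C γ(u)` for
all `n ≥ 1` and all bounded Lipschitz `u`. -/
def LipEquicont {K : Type*} [MetricSpace K] [MeasurableSpace K] (Q : Kernel K K) : Prop :=
  ∃ C : ℝ, 0 < C ∧ ∀ n : ℕ, 1 ≤ n → ∀ u : K → ℝ, MemLip u →
    lipConst (Tn Q n u) ≤ C * lipConst u

/-- `Q` has the shrinking property. -/
def ShrinkingProperty {K : Type*} [MetricSpace K] [MeasurableSpace K] (Q : Kernel K K) : Prop :=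
  ∀ ρ : ℝ, 0 < ρ → ∃ α : ℝ, 0 < α ∧ α < 1 ∧
    ∀ E : Set K, E.Nonempty → IsCompact E → ∀ η : ℝ, 0 < η → ∀ κ : ℝ, 0 < κ →
      ∃ N : ℕ, ∃ F : Set K, F.Nonempty ∧ IsCompact F ∧
        ∀ n : ℕ, N ≤ n → ∀ u : K → ℝ, MemLip u →
          oscOn (Tn Q n u) E ≤
            η * lipConst u + κ * osc u + α * ρ * lipConst u
              + (1 - α) * oscOn (Tn Q (n - N) u) F

/-- `Q` has the strong shrinking property. -/
def StrongShrinkingProperty {K : Type*} [MetricSpace K] [MeasurableSpace K]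
    (Q : Kernel K K) : Prop :=
  ∀ ρ : ℝ, 0 < ρ → ∃ α : ℝ, 0 < α ∧ α < 1 ∧ ∃ N : ℕ,
    ∀ n : ℕ, N ≤ n → ∀ u : K → ℝ, MemLip u →
      osc (Tn Q n u) ≤ α * ρ * lipConst u + (1 - α) * osc (Tn Q (n - N) u)

/-- `Q` is weakly contracting: for all `x, y`,
`sup {∫ u dQⁿ(x,·) − ∫ u dQⁿ(y,·) : u ∈ Lip₁[K]} → 0`. -/
def WeaklyContracting {K : Type*} [MetricSpace K] [MeasurableSpace K] (Q : Kernel K K) : Prop :=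
  ∀ x y : K,
    Filter.Tendsto
      (fun n : ℕ => sSup {d : ℝ | ∃ u : K → ℝ, MemLip1 u ∧ d = Tn Q n u x - Tn Q n u y})
      Filter.atTop (nhds 0)

/-- `Q` is weakly ergodic: weakly contracting, and there is a probability measure `π` with
`∫ u dQⁿ(x,·) → ∫ u dπ` for every bounded continuous `u` and every `x`. -/
def WeaklyErgodic {K : Type*} [MetricSpace K] [MeasurableSpace K] (Q : Kernel K K) : Prop :=
  WeaklyContracting Q ∧
    ∃ π : Measure K, IsProbabilityMeasure π ∧
      ∀ u : K → ℝ, Continuous u → (∃ C : ℝ, ∀ x, |u x| ≤ C) →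
        ∀ x : K, Filter.Tendsto (fun n : ℕ => Tn Q n u x) Filter.atTop (nhds (∫ y, u y ∂π))

section Oscillation

variable {K : Type*} {u : K → ℝ} {E : Set K} {c : ℝ}

lemma sub_le_oscOn (h : ∀ a ∈ E, ∀ b ∈ E, u a - u b ≤ c) {a b : K} (ha : a ∈ E) (hb : b ∈ E) :
    u a - u b ≤ oscOn u E :=
  le_csSup ⟨c, by rintro d ⟨p, hp, q, hq, rfl⟩; exact h p hp q hq⟩ ⟨a, ha, b, hb, rfl⟩

lemma oscOn_le (hE : E.Nonempty) (h : ∀ a ∈ E, ∀ b ∈ E, u a - u b ≤ c) : oscOn u E ≤ c := by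
  obtain ⟨a, ha⟩ := hE
  exact csSup_le ⟨_, a, ha, a, ha, rfl⟩ (by rintro d ⟨p, hp, q, hq, rfl⟩; exact h p hp q hq)

end Oscillation

theorem exists_le_geom_sum_of_recursive_bound {ι β : Type*} {S : Set β} {g : ι → ℕ → β → ℝ}
    {c r : ℝ} (hr : 0 ≤ r)
    (h : ∀ E ∈ S, ∃ N, ∃ F ∈ S, ∀ n, N ≤ n → ∀ i, g i n E ≤ c + r * g i (n - N) F)
    {E : β} (hE : E ∈ S) (k : ℕ) :
    ∃ M, ∃ F ∈ S, ∀ n, M ≤ n → ∀ i,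
      g i n E ≤ c * ∑ j ∈ Finset.range k, r ^ j + r ^ k * g i (n - M) F := by
  induction k with
  | zero => exact ⟨0, E, hE, fun n _ i => by simp⟩
  | succ k ih =>
    obtain ⟨M, F, hF, hM⟩ := ih
    obtain ⟨N, F', hF', hN⟩ := h F hF
    refine ⟨M + N, F', hF', fun n hn i => ?_⟩
    have hstep := hN (n - M) (by omega) i
    rw [Nat.sub_sub] at hstep
    calc g i n E ≤ c * ∑ j ∈ Finset.range k, r ^ j + r ^ k * g i (n - M) F := hM n (by omega) i
      _ ≤ c * ∑ j ∈ Finset.range k, r ^ j + r ^ k * (c + r * g i (n - (M + N)) F') := by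
        gcongr
      _ = c * ∑ j ∈ Finset.range (k + 1), r ^ j + r ^ (k + 1) * g i (n - (M + N)) F' := by
        rw [Finset.sum_range_succ, pow_succ]; ring

section Lipschitz

variable {K : Type*} [MetricSpace K] {u : K → ℝ} {D : ℝ}

lemma MemLip1.lipConst_le_one (hu : MemLip1 u) : lipConst u ≤ 1 :=
  csInf_le ⟨0, fun _ hc => hc.1⟩ ⟨zero_le_one, by simpa using hu.2⟩

lemma MemLip1.memLip (hu : MemLip1 u) : MemLip u :=
  ⟨hu.1, 1, zero_le_one, by simpa using hu.2⟩

lemma memLip1_zero : MemLip1 (0 : K → ℝ) :=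
  ⟨⟨0, by simp⟩, by simp⟩

lemma MemLip.continuous (hu : MemLip u) : Continuous u := by
  obtain ⟨L, hL, hu⟩ := hu.2
  refine (LipschitzWith.of_dist_le_mul (K := L.toNNReal) fun x y => ?_).continuous
  rw [Real.dist_eq, Real.coe_toNNReal L hL]
  exact hu x y

lemma MemLip.exists_eq_mul_memLip1 (hu : MemLip u) :
    ∃ c : ℝ, ∃ v : K → ℝ, MemLip1 v ∧ u = fun x => c * v x := by
  obtain ⟨⟨C, hC⟩, L, hL, hu⟩ := hu
  have hL1 : 0 < L + 1 := by linarith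
  refine ⟨L + 1, fun x => u x / (L + 1), ⟨⟨C / (L + 1), fun x => ?_⟩, fun x y => ?_⟩, ?_⟩
  · rw [abs_div, abs_of_pos hL1]
    exact div_le_div_of_nonneg_right (hC x) hL1.le
  · rw [div_sub_div_same, abs_div, abs_of_pos hL1, div_le_iff₀ hL1]
    nlinarith [hu x y, dist_nonneg (x := x) (y := y)]
  · funext x
    field_simp

lemma LipschitzWith.memLip {L : NNReal} (hL : LipschitzWith L u)
    (hb : ∃ C, ∀ x y, dist (u x) (u y) ≤ C) (x₀ : K) : MemLip u := by
  obtain ⟨C, hC⟩ := hb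
  refine ⟨⟨|u x₀| + C, fun x => ?_⟩, L, L.2, fun x y => ?_⟩
  · have := hC x x₀
    rw [Real.dist_eq] at this
    linarith [abs_sub_abs_le_abs_sub (u x) (u x₀)]
  · rw [← Real.dist_eq]
    exact hL.dist_le_mul x y

lemma MemLip1.osc_le [Nonempty K] (hu : MemLip1 u) (hD : ∀ a b : K, dist a b ≤ D) :
    osc u ≤ D :=
  oscOn_le Set.univ_nonempty fun a _ b _ => (le_abs_self _).trans ((hu.2 a b).trans (hD a b))

end Lipschitz

section Markov

variable {K : Type*} [MeasurableSpace K] {Q : Kernel K K} {u : K → ℝ} {C : ℝ}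

instance (Q : Kernel K K) [IsMarkovKernel Q] (n : ℕ) : IsMarkovKernel (kiter Q n) := by
  induction n with
  | zero => rw [kiter]; infer_instance
  | succ n ih => rw [kiter]; infer_instance

lemma Tn_const_mul (c : ℝ) (n : ℕ) (x : K) : Tn Q n (fun y => c * u y) x = c * Tn Q n u x :=
  integral_const_mul c _

lemma abs_Tn_le [IsMarkovKernel Q] (hC : ∀ y, |u y| ≤ C) (n : ℕ) (x : K) : |Tn Q n u x| ≤ C := by
  simpa [Tn] using norm_integral_le_of_norm_le_const (μ := kiter Q n x) (f := u) (ae_of_all _ hC)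

lemma measurable_Tn (hu : Measurable u) (n : ℕ) : Measurable (Tn Q n u) :=
  (hu.stronglyMeasurable.integral_kernel (κ := kiter Q n)).measurable

lemma abs_integral_sub_le {ν : Measure K} [IsProbabilityMeasure ν] (hu : Integrable u ν)
    {z D : ℝ} (h : ∀ y, |u y - z| ≤ D) : |∫ y, u y ∂ν - z| ≤ D := by
  have := norm_integral_le_of_norm_le_const (μ := ν) (f := fun y => u y - z) (ae_of_all _ h)
  simpa [integral_sub hu (integrable_const z)] using this

lemma abs_Tn_sub_Tn_le [IsMarkovKernel Q] (hu : Measurable u) {D : ℝ}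
    (hD : ∀ s t, |u s - u t| ≤ D) (n : ℕ) (a b : K) : |Tn Q n u a - Tn Q n u b| ≤ 2 * D := by
  have hint : ∀ x, Integrable u (kiter Q n x) := fun x =>
    .of_bound hu.aestronglyMeasurable (|u a| + D) (ae_of_all _ fun y => by
      rw [Real.norm_eq_abs]; linarith [abs_sub_abs_le_abs_sub (u y) (u a), hD y a])
  have ha := abs_integral_sub_le (hint a) (z := u a) (fun y => hD y a)
  have hb := abs_integral_sub_le (hint b) (z := u a) (fun y => hD y a)
  simp only [Tn] at ha hb ⊢
  linarith [abs_sub_le (∫ y, u y ∂kiter Q n a) (u a) (∫ y, u y ∂kiter Q n b),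
    abs_sub_comm (u a) (∫ y, u y ∂kiter Q n b)]

lemma ProbabilityTheory.Kernel.invariant_of_forall_lintegral_eq {μ : Measure K}
    (h : ∀ E, MeasurableSet E → ∫⁻ x, Q x E ∂μ = μ E) : Q.Invariant μ :=
  Measure.ext fun E hE => (Measure.bind_apply hE Q.aemeasurable).trans (h E hE)

lemma ProbabilityTheory.Kernel.Invariant.kiter {μ : Measure K} (hQ : Q.Invariant μ) (n : ℕ) :
    (kiter Q n).Invariant μ := by
  induction n with
  | zero => exact Measure.id_comp
  | succ n ih => exact hQ.comp ih

lemma ProbabilityTheory.Kernel.Invariant.integral_integral {κ : Kernel K K} [IsSFiniteKernel κ]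
    {μ : Measure K} [SFinite μ] (hκ : κ.Invariant μ) (hu : Integrable u μ) :
    ∫ x, ∫ y, u y ∂κ x ∂μ = ∫ y, u y ∂μ := by
  have hu' : Integrable u (κ ∘ₘ μ) := by rwa [hκ.def]
  rw [Measure.comp_eq_comp_const_apply] at hu'
  have := Kernel.integral_comp hu'
  simp only [Kernel.const_apply] at this
  rw [← this, ← Measure.comp_eq_comp_const_apply, hκ.def]

end Markov

section Shrinking

variable {K : Type*} [MetricSpace K] [MeasurableSpace K] [BorelSpace K] {Q : Kernel K K}
  [IsMarkovKernel Q] {u : K → ℝ} {D : ℝ}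

lemma MemLip1.abs_Tn_sub_Tn_le (hu : MemLip1 u) (hD : ∀ a b : K, dist a b ≤ D) (n : ℕ)
    (a b : K) : |Tn Q n u a - Tn Q n u b| ≤ 2 * D :=
  _root_.abs_Tn_sub_Tn_le hu.memLip.continuous.measurable (fun s t => (hu.2 s t).trans (hD s t))
    n a b

lemma MemLip1.oscOn_Tn_le (hu : MemLip1 u) (hD : ∀ a b : K, dist a b ≤ D) {E : Set K}
    (hE : E.Nonempty) (n : ℕ) : oscOn (Tn Q n u) E ≤ 2 * D :=
  oscOn_le hE fun a _ b _ => (le_abs_self _).trans (hu.abs_Tn_sub_Tn_le hD n a b)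

lemma MemLip1.Tn_sub_Tn_le_oscOn (hu : MemLip1 u) (hD : ∀ a b : K, dist a b ≤ D) {E : Set K}
    {a b : K} (ha : a ∈ E) (hb : b ∈ E) (n : ℕ) :
    Tn Q n u a - Tn Q n u b ≤ oscOn (Tn Q n u) E :=
  sub_le_oscOn (fun p _ q _ => (le_abs_self _).trans (hu.abs_Tn_sub_Tn_le hD n p q)) ha hb

theorem ShrinkingProperty.eventually_Tn_sub_Tn_le (hQ : ShrinkingProperty Q)
    (hD : ∀ a b : K, dist a b ≤ D) (x y : K) {ε : ℝ} (hε : 0 < ε) :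
    ∀ᶠ n in atTop, ∀ u, MemLip1 u → Tn Q n u x - Tn Q n u y ≤ ε := by
  have : Nonempty K := ⟨x⟩
  have hD0 : 0 ≤ D := dist_nonneg.trans (hD x x)
  obtain ⟨α, hα0, hα1, hshrink⟩ := hQ (ε / 4) (by positivity)
  set κ := α * ε / (8 * (D + 1)) with hκ_def
  have hκ : 0 < κ := by positivity
  have hκD : κ * (1 + D) = α * ε / 8 := by rw [hκ_def]; field_simp; ring
  -- With `η = κ`, one application of the shrinking property costs `κ (1 + D) + αε/4 = 3αε/8`.
  have hrec : ∀ E ∈ {F : Set K | F.Nonempty ∧ IsCompact F},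
      ∃ N, ∃ F ∈ {F : Set K | F.Nonempty ∧ IsCompact F},
        ∀ n, N ≤ n → ∀ u : {u : K → ℝ // MemLip1 u},
          oscOn (Tn Q n u) E ≤ α * (3 * ε / 8) + (1 - α) * oscOn (Tn Q (n - N) u) F := by
    rintro E ⟨hEne, hEc⟩
    obtain ⟨N, F, hFne, hFc, hN⟩ := hshrink E hEne hEc κ hκ κ hκ
    refine ⟨N, F, ⟨hFne, hFc⟩, fun n hn u => (hN n hn u u.2.memLip).trans ?_⟩
    have h1 := mul_le_mul_of_nonneg_left u.2.lipConst_le_one hκ.le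
    have h2 := mul_le_mul_of_nonneg_left (u.2.osc_le hD) hκ.le
    have h3 := mul_le_mul_of_nonneg_left u.2.lipConst_le_one (by positivity : 0 ≤ α * (ε / 4))
    linarith
  obtain ⟨k, hk⟩ := exists_pow_lt_of_lt_one (show 0 < ε / (4 * (D + 1)) by positivity)
    (show 1 - α < 1 by linarith)
  obtain ⟨M, F, ⟨hFne, -⟩, hM⟩ := exists_le_geom_sum_of_recursive_bound (sub_nonneg.2 hα1.le)
    hrec (E := {x, y}) ⟨⟨x, by simp⟩, (Set.toFinite _).isCompact⟩ k
  have hsum : ∑ j ∈ Finset.range k, (1 - α) ^ j ≤ 1 / α := by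
    simpa using geom_sum_Ico_le_of_lt_one (m := 0) (n := k) (sub_nonneg.2 hα1.le)
      (show 1 - α < 1 by linarith)
  have htail : (1 - α) ^ k * (2 * D) ≤ ε / 2 := by
    rw [lt_div_iff₀ (by positivity)] at hk
    nlinarith [pow_nonneg (sub_nonneg.2 hα1.le) k]
  filter_upwards [eventually_ge_atTop M] with n hn u hu
  calc Tn Q n u x - Tn Q n u y ≤ oscOn (Tn Q n u) {x, y} :=
        hu.Tn_sub_Tn_le_oscOn hD (by simp) (by simp) n
    _ ≤ α * (3 * ε / 8) * ∑ j ∈ Finset.range k, (1 - α) ^ j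
          + (1 - α) ^ k * oscOn (Tn Q (n - M) u) F := hM n hn ⟨u, hu⟩
    _ ≤ α * (3 * ε / 8) * (1 / α) + (1 - α) ^ k * (2 * D) := by
        gcongr
        exact hu.oscOn_Tn_le hD hFne _
    _ ≤ ε := by
        have : α * (3 * ε / 8) * (1 / α) = 3 * ε / 8 := by field_simp
        linarith

end Shrinking

section Ergodic

variable {K : Type*} [MetricSpace K] [MeasurableSpace K] [BorelSpace K] {Q : Kernel K K}
  [IsMarkovKernel Q] {D : ℝ}

theorem ShrinkingProperty.weaklyContracting (hQ : ShrinkingProperty Q)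
    (hD : ∀ a b : K, dist a b ≤ D) : WeaklyContracting Q := by
  intro x y
  refine Metric.tendsto_nhds.2 fun ε hε => ?_
  filter_upwards [hQ.eventually_Tn_sub_Tn_le hD x y (half_pos hε)] with n hn
  have h0 : (0 : ℝ) ∈ {d : ℝ | ∃ u : K → ℝ, MemLip1 u ∧ d = Tn Q n u x - Tn Q n u y} :=
    ⟨0, memLip1_zero, by simp [Tn]⟩
  have hle : ∀ d ∈ {d : ℝ | ∃ u : K → ℝ, MemLip1 u ∧ d = Tn Q n u x - Tn Q n u y}, d ≤ ε / 2 := by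
    rintro d ⟨u, hu, rfl⟩
    exact hn u hu
  rw [Real.dist_0_eq_abs, abs_of_nonneg (le_csSup ⟨_, hle⟩ h0)]
  exact (csSup_le ⟨0, h0⟩ hle).trans_lt (half_lt_self hε)

theorem ShrinkingProperty.tendsto_Tn_sub_Tn (hQ : ShrinkingProperty Q)
    (hD : ∀ a b : K, dist a b ≤ D) {u : K → ℝ} (hu : MemLip u) (x y : K) :
    Tendsto (fun n => Tn Q n u x - Tn Q n u y) atTop (𝓝 0) := by
  obtain ⟨c, v, hv, rfl⟩ := hu.exists_eq_mul_memLip1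
  simp_rw [Tn_const_mul, ← mul_sub]
  rw [← mul_zero c]
  refine tendsto_const_nhds.mul (Metric.tendsto_nhds.2 fun ε hε => ?_)
  filter_upwards [hQ.eventually_Tn_sub_Tn_le hD x y (half_pos hε),
    hQ.eventually_Tn_sub_Tn_le hD y x (half_pos hε)] with n hxy hyx
  rw [Real.dist_0_eq_abs, abs_lt]
  constructor <;> linarith [hxy v hv, hyx v hv]

theorem ShrinkingProperty.tendsto_Tn_integral (hQ : ShrinkingProperty Q)
    (hD : ∀ a b : K, dist a b ≤ D) {μ : Measure K} [IsProbabilityMeasure μ]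
    (hμ : Q.Invariant μ) {u : K → ℝ} (hu : MemLip u) (x : K) :
    Tendsto (fun n => Tn Q n u x) atTop (𝓝 (∫ y, u y ∂μ)) := by
  obtain ⟨C, hC⟩ := hu.1
  have hmeas := hu.continuous.measurable
  have hint : ∀ n, Integrable (Tn Q n u) μ := fun n =>
    .of_bound (measurable_Tn hmeas n).aestronglyMeasurable C (ae_of_all _ (abs_Tn_le hC n))
  have hTn : ∀ n, ∫ z, Tn Q n u z ∂μ = ∫ y, u y ∂μ := fun n =>
    (hμ.kiter n).integral_integral (.of_bound hmeas.aestronglyMeasurable C (ae_of_all _ hC))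
  have hgap : ∀ n, Tn Q n u x - ∫ y, u y ∂μ = ∫ z, (Tn Q n u x - Tn Q n u z) ∂μ := fun n => by
    simp [integral_sub (integrable_const _) (hint n), hTn]
  rw [← tendsto_sub_nhds_zero_iff]
  simp_rw [hgap]
  rw [← integral_zero K ℝ]
  refine tendsto_integral_of_dominated_convergence (fun _ => 2 * C)
    (fun n => (measurable_const.sub (measurable_Tn hmeas n)).aestronglyMeasurable)
    (integrable_const _) (fun n => ae_of_all _ fun z => ?_)
    (ae_of_all _ fun z => hQ.tendsto_Tn_sub_Tn hD hu x z)
  rw [Real.norm_eq_abs]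
  linarith [abs_sub (Tn Q n u x) (Tn Q n u z), abs_Tn_le (Q := Q) hC n x,
    abs_Tn_le (Q := Q) hC n z]

theorem ShrinkingProperty.tendsto_kiter (hQ : ShrinkingProperty Q)
    (hD : ∀ a b : K, dist a b ≤ D) {μ : Measure K} [IsProbabilityMeasure μ]
    (hμ : Q.Invariant μ) (x : K) :
    Tendsto (β := ProbabilityMeasure K) (fun n => ⟨kiter Q n x, inferInstance⟩) atTop
      (𝓝 ⟨μ, inferInstance⟩) :=
  tendsto_iff_forall_lipschitz_integral_tendsto.2 fun _ hb ⟨_, hL⟩ =>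
    hQ.tendsto_Tn_integral hD hμ (hL.memLip hb x) x

end Ergodic

theorem stmt_2_general {K : Type*} [MetricSpace K] [MeasurableSpace K] [BorelSpace K]
    (hbdd : Bornology.IsBounded (Set.univ : Set K))
    (Q : Kernel K K) [IsMarkovKernel Q]
    (hshrink : ShrinkingProperty Q)
    (μ : Measure K) (hprob : IsProbabilityMeasure μ)
    (hinv : ∀ E : Set K, MeasurableSet E → ∫⁻ x, Q x E ∂μ = μ E) :
    WeaklyErgodic Q := by
  obtain ⟨D, hD⟩ := Metric.isBounded_iff.1 hbdd
  replace hD : ∀ a b : K, dist a b ≤ D := fun a b => hD (Set.mem_univ a) (Set.mem_univ b)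
  have hμ : Q.Invariant μ := Kernel.invariant_of_forall_lintegral_eq hinv
  refine ⟨hshrink.weaklyContracting hD, μ, hprob, fun u hu ⟨C, hC⟩ x => ?_⟩
  have := ProbabilityMeasure.tendsto_iff_forall_integral_tendsto.1
    (hshrink.tendsto_kiter hD hμ x) (.ofNormedAddCommGroup u hu C hC)
  simpa [Tn] using this

/-- If `Q` is Lipschitz equicontinuous, has the shrinking property, and has an
invariant probability measure, then `Q` is weakly ergodic. -/
theorem stmt_2 {K : Type*} [MetricSpace K] [CompleteSpace K]
    [TopologicalSpace.SeparableSpace K] [MeasurableSpace K] [BorelSpace K]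
    (hbdd : Bornology.IsBounded (Set.univ : Set K))
    (Q : Kernel K K) [IsMarkovKernel Q]
    (hlip : LipEquicont Q) (hshrink : ShrinkingProperty Q)
    (μ : Measure K) (hprob : IsProbabilityMeasure μ)
    (hinv : ∀ E : Set K, MeasurableSet E → ∫⁻ x, Q x E ∂μ = μ E) :
    WeaklyErgodic Q :=
  stmt_2_general hbdd Q hshrink μ hprob hinv
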